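/- arXiv:2402.10615 — 2 statements merged into one kernel-verified Lean document; each statement's English description precedes it below -/
import Mathlib

section
/- Let V and W be finite-dimensional real inner product spaces and b : V × W → ℝ a bilinear form. The inf-sup condition inf_{w≠0} sup_{v≠0} b(v,w)/(‖v‖‖w‖) ≥ β > 0 holds if and only if the linear map B : V → W* defined by (Bv)(w) = b(v,w) is surjective and for every w ∈ W there exists v ∈ V with b(v,w) = ‖w‖² and ‖v‖ ≤ β⁻¹‖w‖. -/
/-- Finite-dimensional equivalence between the inf-sup (LBB) condition for a bilinear
form `b : V × W → ℝ` and surjectivity of the associated map `B : V → W*` together with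
the existence of bounded realizing elements. -/
theorem stmt_1
    {V W : Type*} [NormedAddCommGroup V] [InnerProductSpace ℝ V] [FiniteDimensional ℝ V]
    [NormedAddCommGroup W] [InnerProductSpace ℝ W] [FiniteDimensional ℝ W]
    (b : V →ₗ[ℝ] W →ₗ[ℝ] ℝ) (β : ℝ) (hβ : 0 < β) :
    -- inf-sup : inf_{w≠0} sup_{v≠0} b(v,w)/(‖v‖‖w‖) ≥ β (sup attained by compactness)
    (∀ w : W, w ≠ 0 → ∃ v : V, v ≠ 0 ∧ β * (‖v‖ * ‖w‖) ≤ b v w) ↔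
      (Function.Surjective (fun v : V => (b v : W →ₗ[ℝ] ℝ)) ∧
        ∀ w : W, ∃ v : V, b v w = ‖w‖ ^ 2 ∧ ‖v‖ ≤ β⁻¹ * ‖w‖) := by
  constructor
  · intro h
    constructor
    · -- surjectivity via Injective b.flip
      have hinj : Function.Injective b.flip := by
        rw [injective_iff_map_eq_zero]
        intro w hw
        by_contra hw0
        obtain ⟨v, hv0, hle⟩ := h w hw0
        have hb : b v w = 0 := by
          have := congrArg (fun f => f v) hw
          simpa using this
        have hpos : 0 < β * (‖v‖ * ‖w‖) := by
          apply mul_pos hβ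
          exact mul_pos (norm_pos_iff.mpr hv0) (norm_pos_iff.mpr hw0)
        rw [hb] at hle
        linarith
      have := (LinearMap.flip_surjective_iff₁ (B := b.flip)).mpr hinj
      simpa [LinearMap.flip_flip] using this
    · intro w
      by_cases hw : w = 0
      · exact ⟨0, by simp [hw], by simp [hw]⟩
      obtain ⟨v, hv0, hle⟩ := h w hw
      have hvn : 0 < ‖v‖ := norm_pos_iff.mpr hv0
      have hwn : 0 < ‖w‖ := norm_pos_iff.mpr hw
      have hbpos : 0 < b v w := lt_of_lt_of_le (by positivity) hle
      refine ⟨(‖w‖ ^ 2 / b v w) • v, ?_, ?_⟩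
      · simp [div_mul_cancel₀, hbpos.ne']
      · have : ‖(‖w‖ ^ 2 / b v w) • v‖ = ‖w‖ ^ 2 / b v w * ‖v‖ := by
          rw [norm_smul, Real.norm_eq_abs, abs_of_pos (by positivity)]
        rw [this]
        rw [div_mul_eq_mul_div, div_le_iff₀ hbpos]
        calc ‖w‖ ^ 2 * ‖v‖ = β⁻¹ * ‖w‖ * (β * (‖v‖ * ‖w‖)) := by
              field_simp
          _ ≤ β⁻¹ * ‖w‖ * b v w := by
              apply mul_le_mul_of_nonneg_left hle (by positivity)
  · rintro ⟨-, h⟩ w hw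
    obtain ⟨v, hbv, hnv⟩ := h w
    have hwn : 0 < ‖w‖ := norm_pos_iff.mpr hw
    have hv0 : v ≠ 0 := by
      intro hv
      rw [hv] at hbv
      simp at hbv
      exact hw (by simpa using norm_eq_zero.mp (by nlinarith [sq_nonneg ‖w‖] : ‖w‖ = 0))
    refine ⟨v, hv0, ?_⟩
    rw [hbv]
    calc β * (‖v‖ * ‖w‖) ≤ β * (β⁻¹ * ‖w‖ * ‖w‖) := by
          apply mul_le_mul_of_nonneg_left _ hβ.le
          exact mul_le_mul_of_nonneg_right hnv hwn.le
      _ = ‖w‖ ^ 2 := by field_simp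
end

section
/- Let V, W, Λ be finite-dimensional real inner product spaces, a : V × V → ℝ, b : V × W → ℝ, and b_Γ : V × Λ → ℝ bilinear forms. Define V_c = {v ∈ V : b_Γ(v,ξ) = 0 for all ξ ∈ Λ}. Suppose b_Γ satisfies the inf-sup condition: for every ξ ∈ Λ there exists v ∈ V with b_Γ(v,ξ) ≥ β‖v‖‖ξ‖ for some β > 0 (ξ ≠ 0, v ≠ 0). Then: (i) if (u,p,λ) solves a(u,v)+b(v,p)+b_Γ(v,λ)=F(v) ∀v, b(u,w)=G(w) ∀w, b_Γ(u,ξ)=0 ∀ξ, then u ∈ V_c and (u,p) solves the reduced problem a(u,v)+b(v,p)=F(v) ∀v ∈ V_c, b(u,w)=G(w) ∀w; (ii) conversely, if (u,p) solves the reduced problem, there exists a unique λ ∈ Λ such that (u,p,λ) solves the full problem. -/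
/-- Abstraction of Lemma 4.4 of the paper: equivalence between the mortar formulation
with Lagrange multiplier and the reduced formulation on the weakly continuous subspace
`V_c = {v : b_Γ(v,ξ) = 0 ∀ξ}`, given the interface inf-sup condition. -/
theorem stmt_2
    {V W L : Type*} [NormedAddCommGroup V] [InnerProductSpace ℝ V] [FiniteDimensional ℝ V]
    [NormedAddCommGroup W] [InnerProductSpace ℝ W] [FiniteDimensional ℝ W]
    [NormedAddCommGroup L] [InnerProductSpace ℝ L] [FiniteDimensional ℝ L]
    (a : V →ₗ[ℝ] V →ₗ[ℝ] ℝ) (b : V →ₗ[ℝ] W →ₗ[ℝ] ℝ) (bΓ : V →ₗ[ℝ] L →ₗ[ℝ] ℝ)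
    (F : V →ₗ[ℝ] ℝ) (G : W →ₗ[ℝ] ℝ)
    (β : ℝ) (hβ : 0 < β)
    (hinfsup : ∀ ξ : L, ξ ≠ 0 → ∃ v : V, v ≠ 0 ∧ β * (‖v‖ * ‖ξ‖) ≤ bΓ v ξ) :
    -- (i) a solution of the full problem yields a solution of the reduced problem
    (∀ (u : V) (p : W) (lam : L),
        (∀ v : V, a u v + b v p + bΓ v lam = F v) →
        (∀ w : W, b u w = G w) →
        (∀ ξ : L, bΓ u ξ = 0) →
        ((∀ ξ : L, bΓ u ξ = 0) ∧
          (∀ v : V, (∀ ξ : L, bΓ v ξ = 0) → a u v + b v p = F v) ∧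
          (∀ w : W, b u w = G w))) ∧
    -- (ii) a solution of the reduced problem extends uniquely to the full problem
    (∀ (u : V) (p : W),
        (∀ ξ : L, bΓ u ξ = 0) →
        (∀ v : V, (∀ ξ : L, bΓ v ξ = 0) → a u v + b v p = F v) →
        (∀ w : W, b u w = G w) →
        ∃! lam : L, ∀ v : V, a u v + b v p + bΓ v lam = F v) := by

  constructor
  · intro u p lam h1 h2 h3
    refine ⟨h3, ?_, h2⟩
    intro v hv
    have := h1 v
    rw [hv lam] at this
    linarith
  · intro u p hu hred _hb
    -- the residual functional
    set T : V →ₗ[ℝ] ℝ := F - a u - (b.flip) p with hT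
    have hTv : ∀ v : V, T v = F v - a u v - b v p := by
      intro v; simp [hT, LinearMap.sub_apply]
    have hker : LinearMap.ker bΓ ≤ LinearMap.ker T := by
      intro v hv
      rw [LinearMap.mem_ker] at hv ⊢
      have hz : ∀ ξ : L, bΓ v ξ = 0 := by
        intro ξ; rw [hv]; rfl
      have := hred v hz
      rw [hTv]; linarith
    -- factor T through the range of bΓ
    let T' : (V ⧸ LinearMap.ker bΓ) →ₗ[ℝ] ℝ := (LinearMap.ker bΓ).liftQ T hker
    let e := bΓ.quotKerEquivRange
    let f : LinearMap.range bΓ →ₗ[ℝ] ℝ := T' ∘ₗ (e.symm : LinearMap.range bΓ →ₗ[ℝ] _)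
    obtain ⟨g, hg⟩ := f.exists_extend
    have hgv : ∀ v : V, g (bΓ v) = T v := by
      intro v
      have hmem : bΓ v ∈ LinearMap.range bΓ := ⟨v, rfl⟩
      have h1 : g (bΓ v) = f ⟨bΓ v, hmem⟩ := by
        have := congrArg (fun φ => φ ⟨bΓ v, hmem⟩) hg
        simpa using this
      rw [h1]
      have h2 : e (Submodule.Quotient.mk v) = ⟨bΓ v, hmem⟩ :=
        Subtype.ext (bΓ.quotKerEquivRange_apply_mk v)
      have h3 : e.symm ⟨bΓ v, hmem⟩ = Submodule.Quotient.mk v := by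
        rw [← h2, LinearEquiv.symm_apply_apply]
      show T' (e.symm ⟨bΓ v, hmem⟩) = T v
      rw [h3]
      exact Submodule.liftQ_apply _ T v
    -- pull back g along the evaluation equivalence
    let lam : L := (Module.evalEquiv ℝ L).symm g
    have hlam : ∀ v : V, bΓ v lam = T v := by
      intro v
      have : Module.evalEquiv ℝ L lam = g := (Module.evalEquiv ℝ L).apply_symm_apply g
      have h4 : Module.Dual.eval ℝ L lam (bΓ v) = g (bΓ v) := by
        rw [← this]; rfl
      have h5 : Module.Dual.eval ℝ L lam (bΓ v) = bΓ v lam := rfl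
      rw [← h5, h4, hgv]
    refine ⟨lam, ?_, ?_⟩
    · intro v
      have := hlam v
      rw [hTv] at this
      linarith
    · intro y hy
      by_contra hne
      have hdiff : y - lam ≠ 0 := sub_ne_zero.mpr hne
      obtain ⟨v, hv0, hvb⟩ := hinfsup (y - lam) hdiff
      have h6 : bΓ v (y - lam) = 0 := by
        have hy' := hy v
        have hl' : a u v + b v p + bΓ v lam = F v := by
          have := hlam v; rw [hTv] at this; linarith
        have : bΓ v y = bΓ v lam := by linarith
        simp [map_sub, this]
      rw [h6] at hvb
      have : 0 < β * (‖v‖ * ‖y - lam‖) := by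
        apply mul_pos hβ
        apply mul_pos (norm_pos_iff.mpr hv0) (norm_pos_iff.mpr hdiff)
      linarith
end
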